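/- arXiv:1910.14106 — 5 statements merged into one kernel-verified Lean document; each statement's English description precedes it below -/
import Mathlib

section
/- Let m ≤ n be positive integers and let α₁, α₂, …, α_m be distinct positive real numbers. Consider the m × n Vandermonde matrix V with entries V_{i,j} = α_i^{j-1} for i ∈ {1,…,m}, j ∈ {1,…,n}. Then every m × m submatrix of V obtained by selecting m distinct columns is invertible (equivalently, has nonzero determinant, i.e., rank m). -/
open Polynomial Finset

/-- A nonzero sum of at most `k` monomials has fewer than `k` distinct positive roots. -/
lemma sparse_poly_pos_roots_lt : ∀ (k : ℕ) (E : Finset ℕ) (b : ℕ → ℝ),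
    E.card ≤ k → E.Nonempty → (∀ e ∈ E, b e ≠ 0) →
    ∀ S : Finset ℝ, (∀ x ∈ S, 0 < x) → (∀ x ∈ S, ∑ e ∈ E, b e * x ^ e = 0) →
    S.card < k := by
  intro k
  induction k with
  | zero =>
    intro E b hcard hne _ _ _ _
    exact absurd (Finset.card_eq_zero.mp (Nat.le_zero.mp hcard))
      (Finset.nonempty_iff_ne_empty.mp hne)
  | succ k ih =>
    intro E b hcard hne hb S hSpos hroot
    by_contra hS
    push_neg at hS
    -- hS : k + 1 ≤ S.card
    set d := E.min' hne with hd
    have hdE : d ∈ E := E.min'_mem hne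
    have hdle : ∀ e ∈ E, d ≤ e := fun e he => E.min'_le e he
    -- the polynomial ∑ b e • X^(e-d)
    set P : ℝ[X] := ∑ e ∈ E, C (b e) * X ^ (e - d) with hP
    have hPeval : ∀ x : ℝ, P.eval x = ∑ e ∈ E, b e * x ^ (e - d) := by
      intro x; simp [hP, eval_finset_sum]
    have hProot : ∀ x ∈ S, P.eval x = 0 := by
      intro x hx
      have hxpos := hSpos x hx
      have h0 := hroot x hx
      have hfac : ∑ e ∈ E, b e * x ^ e = x ^ d * ∑ e ∈ E, b e * x ^ (e - d) := by
        rw [Finset.mul_sum]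
        refine Finset.sum_congr rfl fun e he => ?_
        rw [mul_left_comm, ← pow_add, Nat.add_sub_cancel' (hdle e he)]
      rw [hfac] at h0
      rw [hPeval]
      rcases mul_eq_zero.mp h0 with h | h
      · exact absurd h (pow_ne_zero _ (ne_of_gt hxpos))
      · exact h
    -- derivative
    have hQ : ∀ x : ℝ, P.derivative.eval x = ∑ e ∈ E, b e * (e - d : ℕ) * x ^ (e - d - 1) := by
      intro x
      rw [hP, map_sum, eval_finset_sum]
      refine Finset.sum_congr rfl fun e he => ?_
      rw [derivative_C_mul_X_pow]
      simp
    -- new exponent set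
    set E' : Finset ℕ := (E.erase d).image (fun e => e - (d + 1)) with hE'
    set b' : ℕ → ℝ := fun n => b (n + (d + 1)) * ((n : ℝ) + 1) with hb'
    have hmem : ∀ e ∈ E.erase d, d + 1 ≤ e := by
      intro e he
      have h1 := hdle e (Finset.mem_of_mem_erase he)
      have h2 := Finset.ne_of_mem_erase he
      omega
    have hinj : Set.InjOn (fun e => e - (d + 1)) (E.erase d) := by
      intro a ha a2 ha2 h
      simp only at h
      have := hmem a ha; have := hmem a2 ha2
      omega
    have hQsum : ∀ x : ℝ, P.derivative.eval x = ∑ n ∈ E', b' n * x ^ n := by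
      intro x
      rw [hQ, hE', Finset.sum_image hinj]
      rw [← Finset.add_sum_erase _ _ hdE]
      simp only [Nat.sub_self, Nat.cast_zero, mul_zero, zero_mul, zero_add]
      refine Finset.sum_congr rfl fun e he => ?_
      have h1 := hmem e he
      have h2 : e - (d + 1) + (d + 1) = e := by omega
      have h3 : ((e - (d + 1) : ℕ) : ℝ) + 1 = ((e - d : ℕ) : ℝ) := by
        have h4 : e - (d + 1) + 1 = e - d := by omega
        rw [← h4, Nat.cast_add, Nat.cast_one]
      rw [hb']
      simp only [h2, h3]
      rw [Nat.sub_sub]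
    by_cases hE'ne : E'.Nonempty
    · -- Rolle: build k distinct positive roots of the derivative
      have hScard : S.Nonempty := Finset.card_pos.mp (by omega)
      set s := S.card with hs
      have hsk : k + 1 ≤ s := hS
      set σ : Fin s ↪o ℝ := S.orderEmbOfFin rfl with hσ
      have hσmem : ∀ i, σ i ∈ S := fun i => S.orderEmbOfFin_mem rfl i
      have hrolle : ∀ i : Fin k, ∃ y, σ ⟨i, by omega⟩ < y ∧ y < σ ⟨i + 1, by omega⟩ ∧
          P.derivative.eval y = 0 := by
        intro i
        have hlt : σ ⟨i, by omega⟩ < σ ⟨i + 1, by omega⟩ := by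
          apply σ.strictMono
          exact Fin.mk_lt_mk.mpr (by omega)
        have heq : P.eval (σ ⟨i, by omega⟩) = P.eval (σ ⟨i + 1, by omega⟩) := by
          rw [hProot _ (hσmem _), hProot _ (hσmem _)]
        obtain ⟨y, hy, hy'⟩ := exists_deriv_eq_zero hlt P.continuousOn heq
        refine ⟨y, hy.1, hy.2, ?_⟩
        rw [← Polynomial.deriv]
        exact hy'
      choose y hy1 hy2 hy3 using hrolle
      have hymono : StrictMono y := by
        intro i j hij
        calc y i < σ ⟨i + 1, by omega⟩ := hy2 i
          _ ≤ σ ⟨j, by omega⟩ := σ.monotone (Fin.mk_le_mk.mpr (by omega))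
          _ < y j := hy1 j
      set T : Finset ℝ := Finset.univ.image y with hT
      have hTcard : T.card = k := by
        rw [hT, Finset.card_image_of_injective _ hymono.injective, Finset.card_univ,
          Fintype.card_fin]
      have hTpos : ∀ x ∈ T, 0 < x := by
        intro x hx
        obtain ⟨i, _, rfl⟩ := Finset.mem_image.mp hx
        exact lt_trans (hSpos _ (hσmem _)) (hy1 i)
      have hTroot : ∀ x ∈ T, ∑ n ∈ E', b' n * x ^ n = 0 := by
        intro x hx
        obtain ⟨i, _, rfl⟩ := Finset.mem_image.mp hx
        rw [← hQsum]
        exact hy3 i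
      have hb'ne : ∀ n ∈ E', b' n ≠ 0 := by
        intro n hn
        obtain ⟨e, he, rfl⟩ := Finset.mem_image.mp hn
        have h1 := hmem e he
        have h2 : e - (d + 1) + (d + 1) = e := by omega
        rw [hb']
        simp only [h2]
        refine mul_ne_zero (hb e (Finset.mem_of_mem_erase he)) ?_
        positivity
      have hE'card : E'.card ≤ k := by
        have h1 : E'.card ≤ (E.erase d).card := Finset.card_image_le
        have h2 : (E.erase d).card = E.card - 1 := Finset.card_erase_of_mem hdE
        omega
      have := ih E' b' hE'card hE'ne hb'ne T hTpos hTroot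
      omega
    · -- E = {d}
      have hEd : E = {d} := by
        apply Finset.eq_singleton_iff_unique_mem.mpr
        refine ⟨hdE, fun e he => ?_⟩
        by_contra hne'
        exact hE'ne ⟨e - (d + 1), Finset.mem_image.mpr
          ⟨e, Finset.mem_erase.mpr ⟨hne', he⟩, rfl⟩⟩
      obtain ⟨x, hx⟩ := Finset.card_pos.mp (show 0 < S.card by omega)
      have := hroot x hx
      rw [hEd, Finset.sum_singleton] at this
      exact hb d hdE (by
        rcases mul_eq_zero.mp this with h | h
        · exact h
        · exact absurd h (pow_ne_zero _ (ne_of_gt (hSpos x hx))))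

/-- **Vandermonde submatrices are invertible.**
Let `m ≤ n` be positive integers and `α₁, …, α_m` distinct positive reals.
The `m × n` Vandermonde matrix has entries `V i j = α i ^ j` (exponents `0, …, n-1`).
Every `m × m` submatrix obtained by choosing `m` distinct columns has nonzero
determinant. -/
theorem vandermonde_submatrix_det_ne_zero
    (m n : ℕ) (hm : 0 < m) (hn : 0 < n) (hmn : m ≤ n)
    (α : Fin m → ℝ) (hpos : ∀ i, 0 < α i) (hdist : Function.Injective α)
    (c : Fin m → Fin n) (hc : Function.Injective c) :
    (Matrix.of fun i j : Fin m => α i ^ (c j : ℕ)).det ≠ 0 := by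
  intro hdet
  obtain ⟨v, hv, hMv⟩ := Matrix.exists_mulVec_eq_zero_iff.mpr hdet
  have hcval : Function.Injective (fun j : Fin m => (c j : ℕ)) :=
    fun a b h => hc (Fin.val_injective h)
  set F : Finset (Fin m) := Finset.univ.filter (fun j => v j ≠ 0) with hF
  have hFne : F.Nonempty := by
    obtain ⟨j, hj⟩ := Function.ne_iff.mp hv
    exact ⟨j, by simp only [hF, Finset.mem_filter, Finset.mem_univ, true_and]; simpa using hj⟩
  set E : Finset ℕ := F.image (fun j => (c j : ℕ)) with hE
  set b : ℕ → ℝ := fun nn => ∑ j ∈ Finset.univ.filter (fun j => (c j : ℕ) = nn), v j with hb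
  have hbval : ∀ j : Fin m, b (c j) = v j := by
    intro j
    have : Finset.univ.filter (fun j' => (c j' : ℕ) = (c j : ℕ)) = {j} := by
      ext j'
      simp [Fin.val_inj, hc.eq_iff]
    rw [hb]
    simp only [this, Finset.sum_singleton]
  have hEne : E.Nonempty := hFne.image _
  have hbne : ∀ e ∈ E, b e ≠ 0 := by
    intro e he
    obtain ⟨j, hj, rfl⟩ := Finset.mem_image.mp he
    rw [hbval]
    exact (Finset.mem_filter.mp hj).2
  set S : Finset ℝ := Finset.univ.image α with hS
  have hScard : S.card = m := by
    rw [hS, Finset.card_image_of_injective _ hdist, Finset.card_univ, Fintype.card_fin]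
  have hSpos : ∀ x ∈ S, 0 < x := by
    intro x hx
    obtain ⟨i, _, rfl⟩ := Finset.mem_image.mp hx
    exact hpos i
  have hSroot : ∀ x ∈ S, ∑ e ∈ E, b e * x ^ e = 0 := by
    intro x hx
    obtain ⟨i, _, rfl⟩ := Finset.mem_image.mp hx
    have h1 : ∑ e ∈ E, b e * (α i) ^ e = ∑ j ∈ F, v j * (α i) ^ (c j : ℕ) := by
      rw [hE, Finset.sum_image (fun a _ b _ h => hcval h)]
      exact Finset.sum_congr rfl fun j _ => by rw [hbval]
    have h2 : ∑ j ∈ F, v j * (α i) ^ (c j : ℕ) = ∑ j, v j * (α i) ^ (c j : ℕ) := by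
      rw [hF]
      exact Finset.sum_filter_of_ne (fun j _ h => by
        intro hvj; exact h (by rw [hvj, zero_mul]))
    have h3 : ∑ j, v j * (α i) ^ (c j : ℕ) = 0 := by
      have := congrFun hMv i
      simpa [Matrix.mulVec, dotProduct, mul_comm] using this
    rw [h1, h2, h3]
  have hEcard : E.card ≤ m := le_trans Finset.card_image_le
    (le_trans (Finset.card_filter_le _ _) (by simp))
  have := sparse_poly_pos_roots_lt E.card E b le_rfl hEne hbne S hSpos hSroot
  omega
end

section
/- Let k, n be positive integers with 2k ≤ n, and let α₁, …, α_{2k} be distinct positive real numbers. If β, β′ ∈ ℝⁿ each have at most k nonzero entries and satisfy Σ_{j=0}^{n-1} β_j α_i^{j} = Σ_{j=0}^{n-1} β′_j α_i^{j} for every i ∈ {1,…,2k}, then β = β′. In other words, the 2k Vandermonde measurements at distinct positive points uniquely determine any k-sparse vector. -/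
/-!
Take `P := ∑ⱼ (βⱼ - β'ⱼ) Xʲ`. It has at most `2k` nonzero coefficients, so by Descartes' rule
of signs it has fewer than `2k` positive roots unless `P = 0`; but the measurements say that the
`2k` distinct positive points `αᵢ` are roots of `P`.
-/

open Finset Polynomial

theorem hammingNorm_sub_le {ι : Type*} [Fintype ι] {β : ι → Type*} [∀ i, AddGroup (β i)]
    [∀ i, DecidableEq (β i)] (x y : ∀ i, β i) :
    hammingNorm (x - y) ≤ hammingNorm x + hammingNorm y := by
  have hdist : hammingNorm (x - y) = hammingDist x y := by
    simp only [hammingNorm, hammingDist, Pi.sub_apply, ne_eq, sub_eq_zero]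
  rw [hdist, ← hammingDist_zero_right, ← hammingDist_zero_left]
  exact hammingDist_triangle x 0 y

namespace Polynomial

theorem signVariations_lt_card_support {R : Type*} [Semiring R] [LinearOrder R] {P : R[X]}
    (hP : P ≠ 0) : P.signVariations < #P.support := by
  classical
  have hsupport : P.support = {i ∈ range (P.natDegree + 1) | P.coeff i ≠ 0} := by
    ext i
    simp only [mem_filter, mem_range, mem_support_iff]
    exact ⟨fun h => ⟨Nat.lt_succ_of_le (le_natDegree_of_ne_zero h), h⟩, And.right⟩
  have hlen : ((P.coeffList.map SignType.sign).filter (· ≠ 0)).length = #P.support := by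
    rw [List.filter_map, List.length_map, ← List.countP_eq_length_filter, coeffList,
      List.countP_map, List.countP_reverse, degree_eq_natDegree hP, Nat.cast_withBot,
      WithBot.succ_coe, Order.succ_eq_add_one, hsupport, card_def, filter_val, range_val,
      Multiset.range, Multiset.filter_coe, Multiset.coe_card, List.countP_eq_length_filter]
    simp [Function.comp_def]
  have hdestutter := (List.destutter_sublist (· ≠ ·)
    ((P.coeffList.map SignType.sign).filter (· ≠ 0))).length_le
  have hpos : 0 < #P.support := card_pos.2 (nonempty_support_iff.2 hP)
  rw [signVariations]
  omega

theorem card_lt_card_support_of_pos_roots {R : Type*} [CommRing R] [LinearOrder R]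
    [IsStrictOrderedRing R] {P : R[X]} (hP : P ≠ 0) {s : Finset R}
    (hs : ∀ x ∈ s, 0 < x ∧ P.IsRoot x) : #s < #P.support := by
  have hle : s.val ≤ P.roots.filter (0 < ·) :=
    (Multiset.le_iff_subset s.nodup).2 fun x hx =>
      Multiset.mem_filter.2 ⟨(mem_roots hP).2 (hs x hx).2, (hs x hx).1⟩
  calc #s ≤ P.roots.countP (0 < ·) := by
        rw [Multiset.countP_eq_card_filter]
        exact Multiset.card_le_card hle
    _ ≤ P.signVariations := roots_countP_pos_le_signVariations P
    _ < #P.support := signVariations_lt_card_support hP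

section OfFn

variable {R : Type*} [Semiring R] [DecidableEq R] {n : ℕ}

theorem card_support_ofFn_le (v : Fin n → R) : #(ofFn n v).support ≤ hammingNorm v := by
  have hsub : (ofFn n v).support ⊆ ({j | v j ≠ 0} : Finset (Fin n)).map Fin.valEmbedding := by
    intro i hi
    rw [mem_support_iff] at hi
    have hin : i < n := by
      by_contra! h
      exact hi (ofFn_coeff_eq_zero_of_ge v h)
    rw [ofFn_coeff_eq_val_of_lt v hin] at hi
    exact mem_map.2 ⟨⟨i, hin⟩, by simpa using hi, rfl⟩
  exact (card_le_card hsub).trans_eq (card_map _)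

theorem eval_ofFn (v : Fin n → R) (x : R) : (ofFn n v).eval x = ∑ j, v j * x ^ (j : ℕ) := by
  simp [ofFn_eq_sum_monomial, eval_finsetSum]

end OfFn

end Polynomial

theorem sparse_recovery_vandermonde_general
    (k n : ℕ)
    (α : Fin (2 * k) → ℝ) (hpos : ∀ i, 0 < α i) (hinj : Function.Injective α)
    (β β' : Fin n → ℝ)
    (hβ : (Finset.univ.filter fun j => β j ≠ 0).card ≤ k)
    (hβ' : (Finset.univ.filter fun j => β' j ≠ 0).card ≤ k)
    (hmeas : ∀ i : Fin (2 * k),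
      ∑ j : Fin n, β j * α i ^ (j : ℕ) = ∑ j : Fin n, β' j * α i ^ (j : ℕ)) :
    β = β' := by
  by_contra hne
  set P := ofFn n (β - β')
  have hP : P ≠ 0 := by
    rwa [Ne, ← map_zero (ofFn n), (injective_ofFn n).eq_iff, sub_eq_zero]
  have hroots : ∀ x ∈ univ.image α, 0 < x ∧ P.IsRoot x := by
    simp only [mem_image, mem_univ, true_and, forall_exists_index, forall_apply_eq_imp_iff]
    exact fun i => ⟨hpos i, by simp [IsRoot, P, eval_ofFn, hmeas i]⟩
  have hsupport : #P.support ≤ 2 * k :=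
    calc #P.support ≤ hammingNorm (β - β') := card_support_ofFn_le _
      _ ≤ hammingNorm β + hammingNorm β' := hammingNorm_sub_le β β'
      _ ≤ 2 * k := by unfold hammingNorm; omega
  have hcard := card_lt_card_support_of_pos_roots hP hroots
  rw [card_image_of_injective _ hinj, card_univ, Fintype.card_fin] at hcard
  omega

/-- **Vandermonde measurements uniquely determine sparse vectors.**
Let `2k ≤ n` and `α₁, …, α_{2k}` be distinct positive reals. If `β, β'` are
`k`-sparse vectors in `ℝⁿ` whose Vandermonde measurements
`∑ j, β j * α i ^ j` agree for every `i`, then `β = β'`. -/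
theorem sparse_recovery_vandermonde
    (k n : ℕ) (hk : 0 < k) (hn : 0 < n) (h2k : 2 * k ≤ n)
    (α : Fin (2 * k) → ℝ) (hpos : ∀ i, 0 < α i) (hinj : Function.Injective α)
    (β β' : Fin n → ℝ)
    (hβ : (Finset.univ.filter fun j => β j ≠ 0).card ≤ k)
    (hβ' : (Finset.univ.filter fun j => β' j ≠ 0).card ≤ k)
    (hmeas : ∀ i : Fin (2 * k),
      ∑ j : Fin n, β j * α i ^ (j : ℕ) = ∑ j : Fin n, β' j * α i ^ (j : ℕ)) :
    β = β' :=
  sparse_recovery_vandermonde_general k n α hpos hinj β β' hβ hβ' hmeas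
end

section
/- Let f be a nonzero real polynomial with at most m nonzero coefficients. Then f has at most m − 1 distinct positive real roots. -/
open Polynomial

private lemma posroots_finite (f : Polynomial ℝ) (hf : f ≠ 0) :
    {x : ℝ | 0 < x ∧ f.eval x = 0}.Finite :=
  (Polynomial.finite_setOf_isRoot hf).subset fun _ hx => hx.2

private lemma sparse_key : ∀ m (f : Polynomial ℝ), f ≠ 0 → f.support.card ≤ m →
    {x : ℝ | 0 < x ∧ f.eval x = 0}.ncard + 1 ≤ m := by
  intro m
  induction m with
  | zero =>
    intro f hf hs
    exact absurd (Polynomial.support_eq_empty.mp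
      (Finset.card_eq_zero.mp (Nat.le_zero.mp hs))) hf
  | succ m ih =>
    intro f hf hs
    set n := f.natTrailingDegree with hn
    obtain ⟨g, hg⟩ : (X : Polynomial ℝ) ^ n ∣ f :=
      Polynomial.X_pow_dvd_iff.mpr fun d hd =>
        Polynomial.coeff_eq_zero_of_lt_natTrailingDegree hd
    have hg0 : g ≠ 0 := by rintro rfl; simp at hg; exact hf hg
    have hgc0 : g.coeff 0 ≠ 0 := by
      have h1 : f.trailingCoeff ≠ 0 := Polynomial.trailingCoeff_nonzero_iff_nonzero.mpr hf
      rw [Polynomial.trailingCoeff, ← hn, hg] at h1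
      have h2 := Polynomial.coeff_X_pow_mul g n 0
      rw [zero_add] at h2
      rwa [h2] at h1
    have hsupg : g.support.card ≤ m + 1 := by
      refine le_trans ?_ hs
      apply Finset.card_le_card_of_injOn (fun k => k + n)
      · intro k hk
        simp only [Finset.mem_coe] at hk ⊢
        rw [Polynomial.mem_support_iff] at hk ⊢
        rw [hg]
        simpa using hk
      · intro a _ b _ h; simpa using h
    have hset : {x : ℝ | 0 < x ∧ f.eval x = 0} = {x : ℝ | 0 < x ∧ g.eval x = 0} := by
      ext x
      simp only [Set.mem_setOf_eq, hg, Polynomial.eval_mul, Polynomial.eval_pow,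
        Polynomial.eval_X, mul_eq_zero]
      constructor
      · rintro ⟨hx, h | h⟩
        · exact absurd h (pow_ne_zero _ hx.ne')
        · exact ⟨hx, h⟩
      · rintro ⟨hx, h⟩; exact ⟨hx, Or.inr h⟩
    rw [hset]
    rcases eq_or_ne (derivative g) 0 with hd | hd
    · have : {x : ℝ | 0 < x ∧ g.eval x = 0} = ∅ := by
        ext x
        simp only [Set.mem_setOf_eq, Set.mem_empty_iff_false, iff_false, not_and]
        intro _
        rw [Polynomial.eq_C_of_derivative_eq_zero hd]
        simpa using hgc0
      rw [this]
      simp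
    · have hsupd : (derivative g).support.card ≤ m := by
        have h0mem : (0 : ℕ) ∈ g.support := Polynomial.mem_support_iff.mpr hgc0
        have hle : (derivative g).support.card ≤ (g.support.erase 0).card := by
          apply Finset.card_le_card_of_injOn (fun k => k + 1)
          · intro k hk
            simp only [Finset.mem_coe] at hk ⊢
            rw [Polynomial.mem_support_iff] at hk
            rw [Polynomial.coeff_derivative] at hk
            have : g.coeff (k + 1) ≠ 0 := fun h => hk (by simp [h])
            exact Finset.mem_erase.mpr ⟨by omega, Polynomial.mem_support_iff.mpr this⟩
          · intro a _ b _ h; simpa using h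
        rw [Finset.card_erase_of_mem h0mem] at hle
        omega
      have ihd := ih (derivative g) hd hsupd
      have hSfin := posroots_finite g hg0
      have hTfin := posroots_finite (derivative g) hd
      set S := hSfin.toFinset with hS
      set T := hTfin.toFinset with hT
      have hcard : S.card ≤ T.card + 1 := by
        apply Finset.card_le_of_interleaved
        intro x hx y hy hxy _
        rw [hS, Set.Finite.mem_toFinset] at hx hy
        obtain ⟨z, hz1, hz2⟩ := exists_deriv_eq_zero hxy g.continuousOn
          (hx.2.trans hy.2.symm)
        refine ⟨z, ?_, hz1.1, hz1.2⟩
        rw [hT, Set.Finite.mem_toFinset]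
        exact ⟨hx.1.trans hz1.1, by rwa [← Polynomial.deriv]⟩
      rw [Set.ncard_eq_toFinset_card _ hSfin, ← hS]
      rw [Set.ncard_eq_toFinset_card _ hTfin, ← hT] at ihd
      omega

/-- **Descartes' rule of signs (weak form).**
A nonzero real polynomial with at most `m` nonzero coefficients has at most
`m - 1` distinct positive real roots. -/
theorem sparse_poly_pos_roots
    (m : ℕ) (f : Polynomial ℝ) (hf : f ≠ 0) (hsupp : f.support.card ≤ m) :
    {x : ℝ | 0 < x ∧ f.eval x = 0}.Finite ∧
      {x : ℝ | 0 < x ∧ f.eval x = 0}.ncard ≤ m - 1 := by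
  refine ⟨posroots_finite f hf, ?_⟩
  have := sparse_key m f hf hsupp
  omega
end

section
/- Fix a positive integer L and σ > 0. For mean vectors μ, μ′ ∈ ℝ^L, let g_μ(x) = (1/L) Σ_{i=1}^L (2πσ²)^{-1/2} exp(−(x−μ_i)²/(2σ²)) denote the density of the uniform mixture of L Gaussians with means μ₁,…,μ_L and variance σ², and let 𝒜 be the collection of all subsets of ℝ of the form A_{μ,μ′} = {x ∈ ℝ : g_μ(x) ≥ g_{μ′}(x)} as μ, μ′ range over ℝ^L. Then there is an absolute constant C > 0 such that 𝒜 shatters no finite subset of ℝ of cardinality at least C·L: for every finite S ⊂ ℝ with |S| ≥ C·L, there exists T ⊆ S such that A ∩ S ≠ T for every A ∈ 𝒜. Equivalently, the VC dimension of 𝒜 is O(L). -/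
open MeasureTheory

/-- The density of the uniform mixture of `L` Gaussians with means
`μ₁, …, μ_L` and common variance `σ²`. -/
noncomputable def mixDensity (L : ℕ) (σ : ℝ) (μ : Fin L → ℝ) (x : ℝ) : ℝ :=
  (1 / (L : ℝ)) *
    ∑ i : Fin L,
      (Real.sqrt (2 * Real.pi * σ ^ 2))⁻¹ *
        Real.exp (-(x - μ i) ^ 2 / (2 * σ ^ 2))



/-- Rolle's theorem along a strictly increasing list of zeros. -/
lemma rolle_list (g : ℝ → ℝ) (hc : Continuous g) :
    ∀ l : List ℝ, l.Chain' (· < ·) → (∀ x ∈ l, g x = 0) →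
      ∃ Z : Finset ℝ, l.length ≤ Z.card + 1 ∧ (∀ c ∈ Z, deriv g c = 0) ∧
        (∀ c ∈ Z, ∀ x ∈ l.head?, x < c) := by
  intro l
  induction l with
  | nil => exact fun _ _ => ⟨∅, by simp, by simp, by simp⟩
  | cons x l ih =>
    intro hch hz
    rcases l with _ | ⟨y, t⟩
    · exact ⟨∅, by simp, by simp, by simp⟩
    · rw [List.Chain', List.isChain_cons_cons] at hch
      obtain ⟨hxy, hch'⟩ := hch
      obtain ⟨Z, hZlen, hZzero, hZhead⟩ := ih hch' (fun u hu => hz u (List.mem_cons_of_mem x hu))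
      obtain ⟨c, hcmem, hcderiv⟩ := exists_deriv_eq_zero hxy hc.continuousOn
        (by rw [hz x (by simp), hz y (by simp)])
      have hcZ : c ∉ Z := by
        intro hcZ
        have := hZhead c hcZ y (by simp)
        exact absurd hcmem.2 (not_lt.mpr this.le)
      refine ⟨insert c Z, ?_, ?_, ?_⟩
      · rw [Finset.card_insert_of_notMem hcZ]; simpa using hZlen
      · intro c' hc'
        rcases Finset.mem_insert.mp hc' with rfl | hc'
        · exact hcderiv
        · exact hZzero c' hc'
      · intro c' hc' w hw
        simp only [List.head?_cons, Option.mem_some_iff] at hw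
        subst hw
        rcases Finset.mem_insert.mp hc' with rfl | hc'
        · exact hcmem.1
        · exact lt_trans hxy (hZhead c' hc' y (by simp))

/-- An exponential sum with distinct frequencies vanishing at at least as many
points as it has terms must have all coefficients zero. -/
lemma expsum_zero : ∀ (n : ℕ) (B : Finset ℝ) (a : ℝ → ℝ) (Z : Finset ℝ),
    B.card = n → B.card ≤ Z.card →
    (∀ x ∈ Z, ∑ b ∈ B, a b * Real.exp (b * x) = 0) →
    ∀ b ∈ B, a b = 0 := by
  intro n
  induction n with
  | zero =>
    intro B a Z hB _ _ b hb
    rw [Finset.card_eq_zero] at hB; subst hB; simp at hb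
  | succ n ih =>
    intro B a Z hB hBZ hvan
    obtain ⟨b₀, hb₀⟩ : B.Nonempty := Finset.card_pos.mp (by omega)
    set g : ℝ → ℝ := fun x => ∑ b ∈ B, a b * Real.exp ((b - b₀) * x) with hgdef
    have hcont : Continuous g :=
      continuous_finset_sum B fun b _ =>
        (continuous_const.mul (Real.continuous_exp.comp (continuous_const.mul continuous_id)))
    have hgf : ∀ x, g x = Real.exp (-b₀ * x) * ∑ b ∈ B, a b * Real.exp (b * x) := by
      intro x
      rw [Finset.mul_sum]
      refine Finset.sum_congr rfl fun b _ => ?_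
      have h1 : (b - b₀) * x = -b₀ * x + b * x := by ring
      rw [h1, Real.exp_add]; ring
    have hgz : ∀ x ∈ Z, g x = 0 := fun x hx => by rw [hgf, hvan x hx, mul_zero]
    -- derivative of g
    set g' : ℝ → ℝ := fun x => ∑ b ∈ B.erase b₀, (a b * (b - b₀)) * Real.exp ((b - b₀) * x)
      with hg'def
    have hderiv : ∀ x, HasDerivAt g (g' x) x := by
      intro x
      have h1 : ∀ b ∈ B, HasDerivAt (fun y => a b * Real.exp ((b - b₀) * y))
          ((a b * (b - b₀)) * Real.exp ((b - b₀) * x)) x := by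
        intro b _
        have hmul : HasDerivAt (fun y : ℝ => (b - b₀) * y) (b - b₀) x := by
          simpa using (hasDerivAt_id x).const_mul (b - b₀)
        have := (hmul.exp).const_mul (a b)
        rw [show a b * (b - b₀) * Real.exp ((b - b₀) * x) =
          a b * (Real.exp ((b - b₀) * x) * (b - b₀)) by ring]
        exact this
      have hsum := HasDerivAt.fun_sum h1
      have heq : ∑ b ∈ B, (a b * (b - b₀)) * Real.exp ((b - b₀) * x) = g' x := by
        rw [hg'def]
        exact (Finset.sum_erase B (by simp)).symm
      rw [heq] at hsum
      exact hsum
    -- Rolle zeros of g'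
    have hsorted : (Z.sort (· ≤ ·)).Chain' (· < ·) := (Finset.sortedLT_sort Z).isChain
    obtain ⟨Z₁, hZ₁len, hZ₁zero, -⟩ := rolle_list g hcont (Z.sort (· ≤ ·)) hsorted
      (fun x hx => hgz x ((Finset.mem_sort _).mp hx))
    rw [Finset.length_sort] at hZ₁len
    have hg'zero : ∀ x ∈ Z₁, g' x = 0 := by
      intro x hx
      rw [← (hderiv x).deriv]
      exact hZ₁zero x hx
    -- rewrite g' as an exponential sum with frequencies in B.erase b₀
    have hg'f : ∀ x, g' x =
        Real.exp (-b₀ * x) * ∑ b ∈ B.erase b₀, (a b * (b - b₀)) * Real.exp (b * x) := by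
      intro x
      rw [hg'def, Finset.mul_sum]
      refine Finset.sum_congr rfl fun b _ => ?_
      have h1 : (b - b₀) * x = -b₀ * x + b * x := by ring
      rw [h1, Real.exp_add]; ring
    have hvan' : ∀ x ∈ Z₁, ∑ b ∈ B.erase b₀, (a b * (b - b₀)) * Real.exp (b * x) = 0 := by
      intro x hx
      have := hg'zero x hx
      rw [hg'f] at this
      exact (mul_eq_zero.mp this).resolve_left (Real.exp_ne_zero _)
    have hcard' : (B.erase b₀).card = n := by
      rw [Finset.card_erase_of_mem hb₀, hB]; omega
    have hcard'' : (B.erase b₀).card ≤ Z₁.card := by omega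
    have hzero' := ih (B.erase b₀) (fun b => a b * (b - b₀)) Z₁ hcard' hcard'' hvan'
    have haerase : ∀ b ∈ B, b ≠ b₀ → a b = 0 := by
      intro b hb hne
      have := hzero' b (Finset.mem_erase.mpr ⟨hne, hb⟩)
      exact (mul_eq_zero.mp this).resolve_right (sub_ne_zero.mpr hne)
    -- finally, a b₀ = 0
    obtain ⟨x₀, hx₀⟩ : Z.Nonempty := Finset.card_pos.mp (by omega)
    have hsum : ∑ b ∈ B, a b * Real.exp (b * x₀) = a b₀ * Real.exp (b₀ * x₀) :=
      Finset.sum_eq_single_of_mem b₀ hb₀ fun b hb hne => by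
        rw [haerase b hb hne, zero_mul]
    have hb₀0 : a b₀ = 0 := by
      have := hvan x₀ hx₀
      rw [hsum] at this
      exact (mul_eq_zero.mp this).resolve_right (Real.exp_ne_zero _)
    intro b hb
    by_cases hne : b = b₀
    · rw [hne]; exact hb₀0
    · exact haerase b hb hne

/-- Grouped version: an exponential sum indexed by a fintype (frequencies may
repeat) vanishing at `card ι` points vanishes identically. -/
lemma expsum_zero' {ι : Type} [Fintype ι] (c d : ι → ℝ) (Z : Finset ℝ)
    (hZ : Fintype.card ι ≤ Z.card)
    (h0 : ∀ x ∈ Z, ∑ i, c i * Real.exp (d i * x) = 0) :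
    ∀ x, ∑ i, c i * Real.exp (d i * x) = 0 := by
  classical
  set B := Finset.image d Finset.univ with hBdef
  set a : ℝ → ℝ := fun b => ∑ i ∈ Finset.univ.filter (fun i => d i = b), c i with hadef
  have key : ∀ x, ∑ i, c i * Real.exp (d i * x) = ∑ b ∈ B, a b * Real.exp (b * x) := by
    intro x
    rw [← Finset.sum_fiberwise_of_maps_to
      (fun i _ => Finset.mem_image_of_mem d (Finset.mem_univ i))
      (fun i => c i * Real.exp (d i * x))]
    refine Finset.sum_congr rfl fun b _ => ?_
    rw [hadef, Finset.sum_mul]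
    refine Finset.sum_congr rfl fun i hi => ?_
    rw [(Finset.mem_filter.mp hi).2]
  have hcard : B.card ≤ Z.card :=
    le_trans (le_trans Finset.card_image_le (by simp)) hZ
  have hall := expsum_zero B.card B a Z rfl hcard
    (fun x hx => by rw [← key x]; exact h0 x hx)
  intro x
  rw [key x]
  exact Finset.sum_eq_zero fun b hb => by rw [hall b hb, zero_mul]

/-- **VC dimension of Gaussian-mixture comparison sets is `O(L)`.**
There is an absolute constant `C > 0` such that, for every `L` and `σ > 0`,
the family `𝒜` of sets `A_{μ,μ′} = {x : g_μ(x) ≥ g_{μ′}(x)}` (as `μ, μ′`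
range over `ℝ^L`) shatters no finite subset of `ℝ` of cardinality at least
`C·L`: for every finite `S` with `|S| ≥ C·L` there is `T ⊆ S` such that
`A ∩ S ≠ T` for every `A ∈ 𝒜`. -/
theorem gaussian_mixture_comparison_VC :
    ∃ C : ℝ, 0 < C ∧
      ∀ (L : ℕ), 0 < L → ∀ σ : ℝ, 0 < σ →
        ∀ S : Finset ℝ, C * (L : ℝ) ≤ (S.card : ℝ) →
          ∃ T : Set ℝ, T ⊆ ↑S ∧
            ∀ μ μ' : Fin L → ℝ,
              {x : ℝ | mixDensity L σ μ' x ≤ mixDensity L σ μ x} ∩ ↑S ≠ T := by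
  classical
  refine ⟨5, by norm_num, ?_⟩
  intro L hL σ hσ S hS
  have hσ0 : σ ≠ 0 := ne_of_gt hσ
  have hm : 5 * L ≤ S.card := by exact_mod_cast hS
  set m := S.card with hmdef
  have hLm : 5 * L ≤ m := hm
  set e := S.orderIsoOfFin (rfl : S.card = m) with hedef
  -- T = elements of S at even positions
  set T : Set ℝ := {x | ∃ i : Fin m, Even (i : ℕ) ∧ ((e i : ℝ) = x)} with hTdef
  have hTsub : T ⊆ ↑S := by
    rintro x ⟨i, -, rfl⟩
    exact (e i).2
  refine ⟨T, hTsub, ?_⟩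
  intro μ μ' hEq
  -- the exponential-sum surrogate F for the density difference
  set F : ℝ → ℝ := fun x =>
    (∑ i : Fin L, Real.exp (-(μ i) ^ 2 / (2 * σ ^ 2)) * Real.exp ((μ i / σ ^ 2) * x)) -
    (∑ i : Fin L, Real.exp (-(μ' i) ^ 2 / (2 * σ ^ 2)) * Real.exp ((μ' i / σ ^ 2) * x))
    with hFdef
  have hterm : ∀ (v x : ℝ), Real.exp (-x ^ 2 / (2 * σ ^ 2)) *
      (Real.exp (-v ^ 2 / (2 * σ ^ 2)) * Real.exp ((v / σ ^ 2) * x)) =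
      Real.exp (-(x - v) ^ 2 / (2 * σ ^ 2)) := by
    intro v x
    rw [← Real.exp_add, ← Real.exp_add]
    congr 1
    field_simp
    ring
  have hmix : ∀ (ν : Fin L → ℝ) (x : ℝ), mixDensity L σ ν x =
      (1 / (L : ℝ)) * ((Real.sqrt (2 * Real.pi * σ ^ 2))⁻¹ *
        (Real.exp (-x ^ 2 / (2 * σ ^ 2)) *
          ∑ i : Fin L, Real.exp (-(ν i) ^ 2 / (2 * σ ^ 2)) *
            Real.exp ((ν i / σ ^ 2) * x))) := by
    intro ν x
    rw [mixDensity]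
    simp only [Finset.mul_sum]
    refine Finset.sum_congr rfl fun i _ => ?_
    rw [← hterm (ν i) x]
  have hK : ∀ x : ℝ, 0 < (1 / (L : ℝ)) * ((Real.sqrt (2 * Real.pi * σ ^ 2))⁻¹ *
      Real.exp (-x ^ 2 / (2 * σ ^ 2))) := by
    intro x
    have h1 : (0 : ℝ) < L := by exact_mod_cast hL
    have h2 : (0 : ℝ) < 2 * Real.pi * σ ^ 2 := by positivity
    have h3 : 0 < Real.sqrt (2 * Real.pi * σ ^ 2) := Real.sqrt_pos.mpr h2
    positivity
  have hsign : ∀ x : ℝ, (mixDensity L σ μ' x ≤ mixDensity L σ μ x ↔ 0 ≤ F x) := by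
    intro x
    rw [← sub_nonneg]
    have hdiff : mixDensity L σ μ x - mixDensity L σ μ' x =
        ((1 / (L : ℝ)) * ((Real.sqrt (2 * Real.pi * σ ^ 2))⁻¹ *
          Real.exp (-x ^ 2 / (2 * σ ^ 2)))) * F x := by
      rw [hmix μ x, hmix μ' x, hFdef]
      ring
    rw [hdiff]
    exact mul_nonneg_iff_of_pos_left (hK x)
  -- membership in T for points of S
  have hmemT : ∀ i : Fin m, ((e i : ℝ) ∈ T ↔ Even (i : ℕ)) := by
    intro i
    constructor
    · rintro ⟨j, hj, hje⟩
      have : j = i := e.injective (Subtype.coe_injective hje)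
      rwa [this] at hj
    · intro hi
      exact ⟨i, hi, rfl⟩
  have hmemS : ∀ i : Fin m, (e i : ℝ) ∈ (↑S : Set ℝ) := fun i => (e i).2
  -- sign of F at points of S
  have hFsignS : ∀ i : Fin m, (0 ≤ F (e i) ↔ Even (i : ℕ)) := by
    intro i
    rw [← hmemT i, ← hEq]
    simp only [Set.mem_inter_iff, Set.mem_setOf_eq]
    constructor
    · intro h
      exact ⟨(hsign _).mpr h, hmemS i⟩
    · intro h
      exact (hsign _).mp h.1
  have hmono : StrictMono fun i : Fin m => (e i : ℝ) :=
    fun i j hij => Subtype.coe_lt_coe.mpr (e.strictMono hij)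
  have hcont : Continuous F := by
    apply Continuous.sub <;>
      exact continuous_finset_sum _ fun i _ =>
        continuous_const.mul (Real.continuous_exp.comp (continuous_const.mul continuous_id))
  -- produce a zero of F in each interval [e (2i), e (2i+1)]
  have key : ∀ i : ℕ, ∀ (h1 : 2 * i < m) (h2 : 2 * i + 1 < m),
      ∃ z : ℝ, z ∈ Set.Icc ((e ⟨2 * i, h1⟩ : ℝ)) ((e ⟨2 * i + 1, h2⟩ : ℝ)) ∧ F z = 0 := by
    intro i h1 h2
    have hab : (e ⟨2 * i, h1⟩ : ℝ) < (e ⟨2 * i + 1, h2⟩ : ℝ) := hmono (by simp [Fin.lt_def])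
    have hFa : 0 ≤ F (e ⟨2 * i, h1⟩) := (hFsignS _).mpr ⟨i, by simp; ring⟩
    have hFb : F (e ⟨2 * i + 1, h2⟩) < 0 := by
      by_contra hcon
      have : Even ((⟨2 * i + 1, h2⟩ : Fin m) : ℕ) := (hFsignS _).mp (not_lt.mp hcon)
      obtain ⟨r, hr⟩ := this
      simp only at hr
      omega
    have := intermediate_value_Icc' hab.le hcont.continuousOn
      (Set.mem_Icc.mpr ⟨hFb.le, hFa⟩ : (0:ℝ) ∈ Set.Icc _ _)
    obtain ⟨z, hz, hz0⟩ := this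
    exact ⟨z, hz, hz0⟩
  choose! zf hzf using key
  have hbound : ∀ i : ℕ, i < 2 * L → 2 * i + 1 < m := by intro i hi; omega
  -- the zeros are distinct
  have hzmono : ∀ i j : ℕ, i < 2 * L → j < 2 * L → i < j → zf i < zf j := by
    intro i j hi hj hij
    have h1i := hbound i hi; have h1j := hbound j hj
    have hzi := hzf i (by omega) h1i
    have hzj := hzf j (by omega) h1j
    calc zf i ≤ (e ⟨2 * i + 1, h1i⟩ : ℝ) := hzi.1.2
      _ < (e ⟨2 * j, by omega⟩ : ℝ) := hmono (by simp [Fin.lt_def]; omega)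
      _ ≤ zf j := hzj.1.1
  set Z : Finset ℝ := (Finset.range (2 * L)).image zf with hZdef
  have hZcard : Z.card = 2 * L := by
    rw [hZdef, Finset.card_image_of_injOn, Finset.card_range]
    intro i hi j hj hne
    simp only [Finset.coe_range, Set.mem_Iio] at hi hj
    rcases lt_trichotomy i j with h | h | h
    · exact absurd hne (ne_of_lt (hzmono i j hi hj h))
    · exact h
    · exact absurd hne.symm (ne_of_lt (hzmono j i hj hi h))
  -- F as an exponential sum over Fin L ⊕ Fin L
  set c : Fin L ⊕ Fin L → ℝ :=
    Sum.elim (fun i => Real.exp (-(μ i) ^ 2 / (2 * σ ^ 2)))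
             (fun i => -Real.exp (-(μ' i) ^ 2 / (2 * σ ^ 2))) with hcdef
  set d : Fin L ⊕ Fin L → ℝ :=
    Sum.elim (fun i => μ i / σ ^ 2) (fun i => μ' i / σ ^ 2) with hddef
  have hFsum : ∀ x, F x = ∑ j : Fin L ⊕ Fin L, c j * Real.exp (d j * x) := by
    intro x
    rw [Fintype.sum_sum_type]
    simp only [hcdef, hddef, Sum.elim_inl, Sum.elim_inr, neg_mul]
    rw [Finset.sum_neg_distrib]
    rw [hFdef]
    ring
  have hZvan : ∀ x ∈ Z, ∑ j : Fin L ⊕ Fin L, c j * Real.exp (d j * x) = 0 := by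
    intro x hx
    rw [hZdef] at hx
    obtain ⟨i, hi, rfl⟩ := Finset.mem_image.mp hx
    rw [Finset.mem_range] at hi
    rw [← hFsum]
    exact (hzf i (by omega) (hbound i hi)).2
  have hcardι : Fintype.card (Fin L ⊕ Fin L) ≤ Z.card := by
    rw [hZcard]; simp; omega
  have hFzero : ∀ x, F x = 0 := by
    intro x
    rw [hFsum]
    exact expsum_zero' c d Z hcardι hZvan x
  -- contradiction: the point at odd position 1 must now be in T
  have h1m : 1 < m := by omega
  have hb1 : (e ⟨1, h1m⟩ : ℝ) ∈ T := by
    rw [← hEq]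
    exact ⟨(hsign _).mpr (le_of_eq (hFzero _).symm), hmemS _⟩
  have : Even ((⟨1, h1m⟩ : Fin m) : ℕ) := (hmemT _).mp hb1
  obtain ⟨r, hr⟩ := this
  simp only at hr
  omega
end

section
/- Let n, L ≥ 1 and z ≥ 1 be integers and let β¹, …, β^L ∈ ℝⁿ be pairwise distinct vectors. Let v be uniform on {−1,+1}ⁿ, let r have independent coordinates uniform on the integers {−2z, …, 2z}, and let q be uniform on {1, 2, …, 4z+1}, with v, r, q mutually independent. Call the triplet of vectors (v+r, (q−1)r, v+qr) good if for every triple of indices (i, j, k) ∈ {1,…,L}³ with i, j, k not all equal, ⟨v+r, β^i⟩ + ⟨(q−1)r, β^j⟩ ≠ ⟨v+qr, β^k⟩. Then P((v+r, (q−1)r, v+qr) is good) ≥ 1 − L³·(2/(4z+1) − 1/(4z+1)²). -/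
/-!
For a fixed triple `(i, j, k)` that is not constant, the collision
`⟨v + r, βⁱ⟩ + ⟨(q - 1) r, βʲ⟩ = ⟨v + q r, βᵏ⟩` reads `⟨r, βⁱ + (q - 1) βʲ - q βᵏ⟩ = ⟨v, βᵏ - βⁱ⟩`.
As the `β`s are distinct, the coefficient vector vanishes for at most one `q`. For every other `q`,
once all coordinates of `r` but one where that vector is nonzero are fixed, at most one value of the
remaining coordinate gives a collision, so it has probability at most `a = 1/(4z+1)`. A triple thus
collides with probability at most `a + (1 - a) a = 2/(4z+1) - 1/(4z+1)²`, and a union bound over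
the `L³` triples concludes.
-/

open MeasureTheory

/-- A triplet of query vectors `(v₁, v₂, v₃)` is *good* with respect to
`β¹, …, β^L` if, for every triple of indices `(i, j, k)` that are not all
equal, `⟨v₁, β^i⟩ + ⟨v₂, β^j⟩ ≠ ⟨v₃, β^k⟩`. -/
def IsGoodTriplet {L n : ℕ} (β : Fin L → Fin n → ℝ) (v₁ v₂ v₃ : Fin n → ℝ) :
    Prop :=
  ∀ i j k : Fin L, ¬(i = j ∧ j = k) →
    (∑ t, v₁ t * β i t) + (∑ t, v₂ t * β j t) ≠ ∑ t, v₃ t * β k t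

open Finset
open scoped ENNReal

theorem Set.Subsingleton.measure_le {α : Type*} [MeasurableSpace α] {μ : Measure α}
    {a : ℝ≥0∞} (ha : ∀ x, μ {x} ≤ a) {S : Set α} (hS : S.Subsingleton) : μ S ≤ a := by
  rcases hS.eq_empty_or_singleton with rfl | ⟨x, rfl⟩
  · simp
  · exact ha x

theorem PMF.toMeasure_uniformOfFinset_singleton_le {α : Type*} [MeasurableSpace α]
    [MeasurableSingletonClass α] (s : Finset α) (hs : s.Nonempty) (x : α) :
    (PMF.uniformOfFinset s hs).toMeasure {x} ≤ (#s : ℝ≥0∞)⁻¹ := by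
  rw [PMF.toMeasure_apply_singleton _ _ (measurableSet_singleton x), PMF.uniformOfFinset_apply]
  split_ifs <;> simp

theorem measure_pi_sum_mul_eq_le {n : ℕ} (μ : Fin n → Measure ℤ)
    [∀ t, IsProbabilityMeasure (μ t)] {a : ℝ≥0∞} (hμ : ∀ t x, μ t {x} ≤ a)
    {w : Fin n → ℝ} (hw : w ≠ 0) (c : ℝ) :
    Measure.pi μ {r : Fin n → ℤ | ∑ t, (r t : ℝ) * w t = c} ≤ a := by
  obtain ⟨t₀, ht₀⟩ := Function.ne_iff.1 hw
  cases n with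
  | zero => exact t₀.elim0
  | succ m =>
  -- a line in the direction of `t₀` meets the hyperplane at most once
  set e := MeasurableEquiv.piFinSuccAbove (fun _ => ℤ) t₀
  rw [← ((measurePreserving_piFinSuccAbove μ t₀).symm e).measure_preimage_equiv,
    Measure.prod_apply_symm ((Set.to_countable _).measurableSet)]
  calc _ ≤ ∫⁻ _, a ∂(Measure.pi fun j => μ (t₀.succAbove j)) := by
        refine lintegral_mono fun y => Set.Subsingleton.measure_le (hμ t₀) ?_
        intro x₁ hx₁ x₂ hx₂
        simp only [Set.mem_preimage, Set.mem_ofPred_eq, e,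
          MeasurableEquiv.piFinSuccAbove_symm_apply, Fin.sum_univ_succAbove _ t₀,
          Fin.insertNthEquiv_apply, Fin.insertNth_apply_same,
          Fin.insertNth_apply_succAbove] at hx₁ hx₂
        exact_mod_cast mul_right_cancel₀ ht₀ (add_right_cancel (hx₁.trans hx₂.symm))
    _ = a := by simp

theorem setOf_add_sub_one_smul_sub_smul_eq_zero_subsingleton {K V : Type*} [Field K]
    [AddCommGroup V] [Module K V] {x y z : V} (h : ¬(x = y ∧ y = z)) :
    {q : K | x + (q - 1) • y - q • z = 0}.Subsingleton := by
  intro q₁ (h₁ : x + (q₁ - 1) • y - q₁ • z = 0) q₂ (h₂ : x + (q₂ - 1) • y - q₂ • z = 0)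
  have hdiff : (q₁ - q₂) • (y - z) = 0 := by linear_combination (norm := module) h₁ - h₂
  rcases smul_eq_zero.1 hdiff with hq | hyz
  · exact sub_eq_zero.1 hq
  · rw [sub_eq_zero] at hyz
    subst hyz
    exact absurd ⟨by linear_combination (norm := module) h₁, rfl⟩ h

theorem sum_add_sum_eq_sum_iff {ι : Type*} [Fintype ι] (v r x y z : ι → ℝ) (q : ℝ) :
    (∑ t, (v t + r t) * x t) + (∑ t, (q - 1) * r t * y t) = ∑ t, (v t + q * r t) * z t ↔
      ∑ t, r t * (x + (q - 1) • y - q • z) t = ∑ t, v t * (z t - x t) := by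
  have key : (∑ t, (v t + r t) * x t) + (∑ t, (q - 1) * r t * y t)
      - ∑ t, (v t + q * r t) * z t
      = ∑ t, r t * (x + (q - 1) • y - q • z) t - ∑ t, v t * (z t - x t) := by
    simp only [← sum_add_distrib, ← sum_sub_distrib]
    exact sum_congr rfl fun t _ => by
      simp only [Pi.add_apply, Pi.sub_apply, Pi.smul_apply, smul_eq_mul]
      ring
  rw [← sub_eq_zero, key, sub_eq_zero]

theorem measure_prod_prod_le_of_notMem_le {α β γ : Type*} [MeasurableSpace α]
    [MeasurableSpace β] [MeasurableSpace γ] (μ : Measure α) [IsProbabilityMeasure μ] (ν : Measure β)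
    [IsProbabilityMeasure ν] (ρ : Measure γ) [IsProbabilityMeasure ρ]
    {E : Set (α × β × γ)} (hE : MeasurableSet E) {S : Set γ} (hS : MeasurableSet S)
    {a b : ℝ≥0∞} (hρ : ρ S ≤ b) (hν : ∀ x, ∀ c ∉ S, ν {y | (x, y, c) ∈ E} ≤ a) :
    (μ.prod (ν.prod ρ)) E ≤ (1 - a) * b + a := by
  have hsection : ∀ x, (ν.prod ρ) (Prod.mk x ⁻¹' E) ≤ (1 - a) * b + a := fun x => by
    rw [Measure.prod_apply_symm (measurable_prodMk_left hE)]
    calc _ ≤ ∫⁻ c, S.indicator (fun _ => 1 - a) c + a ∂ρ := by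
          refine lintegral_mono fun c => ?_
          by_cases hc : c ∈ S
          · rw [Set.indicator_of_mem hc]
            exact prob_le_one.trans le_tsub_add
          · rw [Set.indicator_of_notMem hc, zero_add]
            exact hν x c hc
      _ = (1 - a) * ρ S + a := by
          rw [lintegral_add_right _ measurable_const, lintegral_indicator_const hS,
            lintegral_const, measure_univ, mul_one]
      _ ≤ (1 - a) * b + a := by gcongr
  calc _ = ∫⁻ x, (ν.prod ρ) (Prod.mk x ⁻¹' E) ∂μ := Measure.prod_apply hE
    _ ≤ ∫⁻ _, (1 - a) * b + a ∂μ := lintegral_mono hsection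
    _ = (1 - a) * b + a := by simp

theorem ofReal_one_sub_card_mul_le_measure {Ω ι : Type*} [MeasurableSpace Ω] [Fintype ι]
    (μ : Measure Ω) [IsProbabilityMeasure μ] {G : Set Ω} (B : ι → Set Ω)
    (hG : Gᶜ ⊆ ⋃ i, B i) {ε : ℝ} (hε : 0 ≤ ε) (hB : ∀ i, μ (B i) ≤ ENNReal.ofReal ε) :
    ENNReal.ofReal (1 - Fintype.card ι * ε) ≤ μ G := by
  have hGc : μ Gᶜ ≤ ENNReal.ofReal (Fintype.card ι * ε) := calc
    μ Gᶜ ≤ ∑ i, μ (B i) := (measure_mono hG).trans (measure_iUnion_fintype_le μ B)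
    _ ≤ ∑ _i : ι, ENNReal.ofReal ε := sum_le_sum fun i _ => hB i
    _ = ENNReal.ofReal (Fintype.card ι * ε) := by
        rw [sum_const, nsmul_eq_mul, ENNReal.ofReal_mul (Nat.cast_nonneg _),
          ENNReal.ofReal_natCast, card_univ]
  calc ENNReal.ofReal (1 - Fintype.card ι * ε)
      = 1 - ENNReal.ofReal (Fintype.card ι * ε) := by
        rw [ENNReal.ofReal_sub _ (by positivity), ENNReal.ofReal_one]
    _ ≤ 1 - μ Gᶜ := tsub_le_tsub_left hGc 1
    _ ≤ μ G := by
        rw [tsub_le_iff_right, ← measure_univ (μ := μ), ← Set.union_compl_self G]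
        exact measure_union_le G Gᶜ

theorem ENNReal.one_sub_inv_mul_inv_add_inv_natCast {N : ℕ} (hN : N ≠ 0) :
    (1 - (N : ℝ≥0∞)⁻¹) * (N : ℝ≥0∞)⁻¹ + (N : ℝ≥0∞)⁻¹
      = ENNReal.ofReal (2 / N - 1 / (N : ℝ) ^ 2) := by
  have hN' : (1 : ℝ) ≤ N := Nat.one_le_cast.2 (Nat.one_le_iff_ne_zero.2 hN)
  have hp : (N : ℝ≥0∞)⁻¹ = ENNReal.ofReal (N : ℝ)⁻¹ := by
    rw [ENNReal.ofReal_inv_of_pos (by positivity), ENNReal.ofReal_natCast]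
  have hp1 : (N : ℝ)⁻¹ ≤ 1 := inv_le_one_of_one_le₀ hN'
  rw [hp, ← ENNReal.ofReal_one, ← ENNReal.ofReal_sub _ (by positivity),
    ← ENNReal.ofReal_mul (by linarith),
    ← ENNReal.ofReal_add (mul_nonneg (by linarith) (by positivity)) (by positivity)]
  congr 1
  field_simp
  ring

/-- With `ω = (v, r, q)`: the event `⟨v + r, x⟩ + ⟨(q - 1) r, y⟩ = ⟨v + q r, z⟩`. -/
def tripletCollision {n : ℕ} (x y z : Fin n → ℝ) : Set ((Fin n → ℤ) × (Fin n → ℤ) × ℤ) :=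
  {ω | (∑ t, ((ω.1 t : ℝ) + ω.2.1 t) * x t) + (∑ t, ((ω.2.2 : ℝ) - 1) * ω.2.1 t * y t)
    = ∑ t, ((ω.1 t : ℝ) + ω.2.2 * ω.2.1 t) * z t}

theorem measure_tripletCollision_le {n : ℕ} {x y z : Fin n → ℝ} (hxyz : ¬(x = y ∧ y = z))
    (μ : Measure (Fin n → ℤ)) [IsProbabilityMeasure μ] (ν : Fin n → Measure ℤ)
    [∀ t, IsProbabilityMeasure (ν t)] (ρ : Measure ℤ) [IsProbabilityMeasure ρ] {a : ℝ≥0∞}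
    (hν : ∀ t c, ν t {c} ≤ a) (hρ : ∀ c, ρ {c} ≤ a) :
    (μ.prod ((Measure.pi ν).prod ρ)) (tripletCollision x y z) ≤ (1 - a) * a + a := by
  refine measure_prod_prod_le_of_notMem_le μ _ ρ (Set.to_countable _).measurableSet
    (S := {q : ℤ | x + ((q : ℝ) - 1) • y - (q : ℝ) • z = 0}) (Set.to_countable _).measurableSet
    (((setOf_add_sub_one_smul_sub_smul_eq_zero_subsingleton hxyz).preimage
      Int.cast_injective).measure_le hρ) fun v q hq => ?_
  simp only [tripletCollision, Set.mem_ofPred_eq, sum_add_sum_eq_sum_iff]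
  exact measure_pi_sum_mul_eq_le ν hν hq _

/-- **A random triplet `(v+r, (q−1)r, v+qr)` is good with high probability.**
With `v` uniform on `{−1,+1}ⁿ`, `r` with independent coordinates uniform on
the integers `{−2z, …, 2z}`, and `q` uniform on `{1, …, 4z+1}`, all mutually
independent, the triplet `(v+r, (q−1)r, v+qr)` is good with respect to
pairwise distinct `β¹, …, β^L` with probability at least
`1 − L³(2/(4z+1) − 1/(4z+1)²)`. -/
theorem good_triplet_probability
    (n L z : ℕ)
    (β : Fin L → Fin n → ℝ) (hβ : ∀ i j : Fin L, i ≠ j → β i ≠ β j) :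
    ENNReal.ofReal
        (1 - (L : ℝ) ^ 3 *
          (2 / (4 * (z : ℝ) + 1) - 1 / (4 * (z : ℝ) + 1) ^ 2))
      ≤ ((Measure.pi fun _ : Fin n =>
            (PMF.uniformOfFinset ({-1, 1} : Finset ℤ) (by simp)).toMeasure).prod
          ((Measure.pi fun _ : Fin n =>
              (PMF.uniformOfFinset (Finset.Icc (-(2 * (z : ℤ))) (2 * (z : ℤ)))
                (Finset.nonempty_Icc.mpr (by omega))).toMeasure).prod
            (PMF.uniformOfFinset (Finset.Icc (1 : ℤ) (4 * (z : ℤ) + 1))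
              (Finset.nonempty_Icc.mpr (by omega))).toMeasure))
          {ω : (Fin n → ℤ) × (Fin n → ℤ) × ℤ |
            IsGoodTriplet β
              (fun t => (ω.1 t : ℝ) + (ω.2.1 t : ℝ))
              (fun t => ((ω.2.2 : ℝ) - 1) * (ω.2.1 t : ℝ))
              (fun t => (ω.1 t : ℝ) + (ω.2.2 : ℝ) * (ω.2.1 t : ℝ))} := by
  have hN : ((4 * z + 1 : ℕ) : ℝ) = 4 * (z : ℝ) + 1 := by push_cast; ring
  have hbound := ENNReal.one_sub_inv_mul_inv_add_inv_natCast (N := 4 * z + 1) (by omega)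
  rw [hN] at hbound
  have hcard : (Fintype.card (Fin L × Fin L × Fin L) : ℝ) = L ^ 3 := by
    simp only [Fintype.card_prod, Fintype.card_fin]
    push_cast
    ring
  rw [← hcard]
  refine ofReal_one_sub_card_mul_le_measure _
    (fun p : Fin L × Fin L × Fin L => {ω | ¬(p.1 = p.2.1 ∧ p.2.1 = p.2.2) ∧
      ω ∈ tripletCollision (β p.1) (β p.2.1) (β p.2.2)}) ?_ ?_ fun ⟨i, j, k⟩ => ?_
  · intro ω hω
    simp only [Set.mem_compl_iff, Set.mem_ofPred_eq, IsGoodTriplet, not_forall, not_not] at hω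
    obtain ⟨i, j, k, hijk, hcoll⟩ := hω
    exact Set.mem_iUnion.2 ⟨(i, j, k), hijk, hcoll⟩
  · rw [sub_nonneg, div_le_div_iff₀ (by positivity) (by positivity)]
    nlinarith
  · by_cases hijk : i = j ∧ j = k
    · simp [hijk]
    have hβ' : ¬(β i = β j ∧ β j = β k) := fun h =>
      hijk ⟨not_imp_not.1 (hβ i j) h.1, not_imp_not.1 (hβ j k) h.2⟩
    have hcard₁ : #(Icc (-(2 * (z : ℤ))) (2 * z)) = 4 * z + 1 := by rw [Int.card_Icc]; omega
    have hcard₂ : #(Icc (1 : ℤ) (4 * z + 1)) = 4 * z + 1 := by rw [Int.card_Icc]; omega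
    rw [← hbound]
    refine (measure_mono fun ω h => h.2).trans (measure_tripletCollision_le hβ' _ _ _
      (fun _ c => ?_) (fun c => ?_))
    · exact (PMF.toMeasure_uniformOfFinset_singleton_le _ _ c).trans_eq (by rw [hcard₁])
    · exact (PMF.toMeasure_uniformOfFinset_singleton_le _ _ c).trans_eq (by rw [hcard₂])
end
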